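/- arXiv:0911.1896 — 5 statements merged into one kernel-verified Lean document; each statement's English description precedes it below -/
import Mathlib

section
/- Let a > 0 satisfy tanh(aπ) = 1/2. Then the quantity Q = a³ / (2 ∫₀^π 4a⁴/cosh⁴(ax) dx) equals 3/11, and in particular Q > 3/16. -/
open Real

lemma hasDerivAt_tanh' (x : ℝ) : HasDerivAt Real.tanh (1 / Real.cosh x ^ 2) x := by
  have h := (Real.hasDerivAt_sinh x).div (Real.hasDerivAt_cosh x) (Real.cosh_pos x).ne'
  have : Real.tanh = fun x => Real.sinh x / Real.cosh x := by
    funext y; exact Real.tanh_eq_sinh_div_cosh y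
  rw [this]
  refine h.congr_deriv ?_
  have := Real.cosh_sq_sub_sinh_sq x
  field_simp
  ring_nf
  nlinarith [Real.cosh_sq_sub_sinh_sq x]

theorem stmt_1 (a : ℝ) (ha : 0 < a) (h : Real.tanh (a * π) = 1 / 2) :
    a ^ 3 / (2 * ∫ x in (0:ℝ)..π, 4 * a ^ 4 / Real.cosh (a * x) ^ 4) = 3 / 11 ∧
      3 / 16 < a ^ 3 / (2 * ∫ x in (0:ℝ)..π, 4 * a ^ 4 / Real.cosh (a * x) ^ 4) := by
  have key : (∫ x in (0:ℝ)..π, 4 * a ^ 4 / Real.cosh (a * x) ^ 4)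
      = 11 * a ^ 3 / 6 := by
    have hF : ∀ x ∈ Set.uIcc (0:ℝ) π, HasDerivAt
        (fun x => 4 * a ^ 3 * (Real.tanh (a * x) - Real.tanh (a * x) ^ 3 / 3))
        (4 * a ^ 4 / Real.cosh (a * x) ^ 4) x := by
      intro x _
      have hax : HasDerivAt (fun x : ℝ => a * x) a x := by
        simpa using (hasDerivAt_id x).const_mul a
      have ht : HasDerivAt (fun x => Real.tanh (a * x)) (1 / Real.cosh (a * x) ^ 2 * a) x :=
        (hasDerivAt_tanh' (a * x)).comp x hax
      have := ((ht.sub ((ht.pow 3).div_const 3)).const_mul (4 * a ^ 3))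
      refine this.congr_deriv ?_
      have hc := (Real.cosh_pos (a * x)).ne'
      have htanh : Real.tanh (a * x) ^ 2 = 1 - 1 / Real.cosh (a * x) ^ 2 := by
        rw [Real.tanh_eq_sinh_div_cosh]
        field_simp
        nlinarith [Real.cosh_sq_sub_sinh_sq (a * x)]
      rw [htanh]
      field_simp
      ring
    have hint : IntervalIntegrable (fun x => 4 * a ^ 4 / Real.cosh (a * x) ^ 4)
        MeasureTheory.volume 0 π := by
      apply Continuous.intervalIntegrable
      exact continuous_const.div ((Real.continuous_cosh.comp (continuous_const.mul
        continuous_id)).pow 4) (fun x => by positivity)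
    rw [intervalIntegral.integral_eq_sub_of_hasDerivAt hF hint]
    simp only [mul_zero, Real.tanh_zero, h]
    ring
  rw [key]
  constructor
  · rw [div_eq_div_iff (by positivity) (by norm_num)]
    ring
  · rw [div_lt_div_iff₀ (by norm_num) (by positivity)]
    nlinarith [pow_pos ha 3]
end

section
/- If k = (1/π) arctan(1/√2), then the ratio ((π - arctan(1/√2))/arctan(1/√2))² is strictly greater than 16, and in particular greater than 5. -/
open Real

theorem stmt_3 (k : ℝ) (hk : k = (1 / π) * Real.arctan (1 / Real.sqrt 2)) :
    ((π - Real.arctan (1 / Real.sqrt 2)) / Real.arctan (1 / Real.sqrt 2)) ^ 2 > 16 ∧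
      ((π - Real.arctan (1 / Real.sqrt 2)) / Real.arctan (1 / Real.sqrt 2)) ^ 2 > 5 := by
  have hs2 : (0:ℝ) < Real.sqrt 2 := Real.sqrt_pos.mpr (by norm_num)
  have ha0 : 0 < Real.arctan (1 / Real.sqrt 2) := by
    have : Real.arctan 0 < Real.arctan (1 / Real.sqrt 2) :=
      Real.arctan_strictMono (by positivity)
    simpa [Real.arctan_zero] using this
  have hpi : 0 < π := Real.pi_pos
  have hc : Real.cos (π / 5) = (1 + Real.sqrt 5) / 4 := Real.cos_pi_div_five
  have hcpos : 0 < Real.cos (π / 5) := by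
    rw [hc]; positivity
  have hspos : 0 < Real.sin (π / 5) := by
    apply Real.sin_pos_of_pos_of_lt_pi <;> nlinarith [Real.pi_pos]
  have hs5 : Real.sqrt 5 ^ 2 = 5 := Real.sq_sqrt (by norm_num)
  have hs5lt : Real.sqrt 5 < 7 / 3 := by
    nlinarith [Real.sqrt_nonneg 5]
  have hsin2 : Real.sin (π / 5) ^ 2 = 1 - ((1 + Real.sqrt 5) / 4) ^ 2 := by
    have := Real.sin_sq_add_cos_sq (π / 5)
    rw [hc] at this; linarith
  have hkey : 1 / Real.sqrt 2 < Real.tan (π / 5) := by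
    rw [Real.tan_eq_sin_div_cos, div_lt_div_iff₀ hs2 hcpos]
    -- 1 * cos < sin * √2, square both sides
    have h2 : Real.sqrt 2 ^ 2 = 2 := Real.sq_sqrt (by norm_num)
    nlinarith [hspos, hcpos, hsin2, hs5lt, Real.sqrt_nonneg 5, Real.sqrt_nonneg 2,
      mul_pos hspos hs2]
  have halt : Real.arctan (1 / Real.sqrt 2) < π / 5 := by
    have := Real.arctan_strictMono hkey
    rwa [Real.arctan_tan (by linarith) (by linarith)] at this
  have hratio : 4 < (π - Real.arctan (1 / Real.sqrt 2)) / Real.arctan (1 / Real.sqrt 2) := by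
    rw [lt_div_iff₀ ha0]; linarith
  have h16 : (16:ℝ) < ((π - Real.arctan (1 / Real.sqrt 2)) / Real.arctan (1 / Real.sqrt 2)) ^ 2 := by
    nlinarith
  exact ⟨h16, by linarith⟩
end

section
/- For every natural number N ≥ 1, the quantity ((π - arctan(1/√N))/arctan(1/√N))² is at least N, and it tends to infinity as N → ∞ (indeed it is asymptotic to π²N). -/
open Real Filter

noncomputable def fancyBalloonRatio (N : ℕ) : ℝ :=
  ((π - Real.arctan (1 / Real.sqrt N)) / Real.arctan (1 / Real.sqrt N)) ^ 2

lemma my_arctan_nonneg {x : ℝ} (hx : 0 ≤ x) : 0 ≤ Real.arctan x := by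
  have := Real.arctan_strictMono.monotone hx
  simpa using this

lemma my_arctan_pos {x : ℝ} (hx : 0 < x) : 0 < Real.arctan x := by
  have := Real.arctan_strictMono hx
  simpa using this

lemma my_sqrt_tendsto : Tendsto (fun N : ℕ => Real.sqrt N) atTop atTop := by
  apply tendsto_atTop_atTop.mpr
  intro b
  refine ⟨⌈b ^ 2⌉₊, fun a ha => ?_⟩
  have h : b ^ 2 ≤ (a : ℝ) := le_trans (Nat.le_ceil _) (by exact_mod_cast ha)
  calc b ≤ |b| := le_abs_self b
    _ = Real.sqrt (b ^ 2) := (Real.sqrt_sq_eq_abs b).symm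
    _ ≤ Real.sqrt a := Real.sqrt_le_sqrt h

lemma arctan_le_self {x : ℝ} (hx : 0 ≤ x) : Real.arctan x ≤ x := by
  have h := Real.le_tan (my_arctan_nonneg hx) (Real.arctan_lt_pi_div_two x)
  rwa [Real.tan_arctan] at h

lemma part1 : ∀ N : ℕ, 1 ≤ N → (N : ℝ) ≤ fancyBalloonRatio N := by
  intro N hN
  have hN1 : (1 : ℝ) ≤ (N : ℝ) := by exact_mod_cast hN
  have hs : (1 : ℝ) ≤ Real.sqrt N := by
    rw [show (1:ℝ) = Real.sqrt 1 by simp]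
    exact Real.sqrt_le_sqrt hN1
  have hs0 : (0 : ℝ) < Real.sqrt N := by linarith
  set a := Real.arctan (1 / Real.sqrt N) with ha
  have hapos : 0 < a := my_arctan_pos (by positivity)
  have hale : a ≤ 1 / Real.sqrt N := arctan_le_self (by positivity)
  have hinv : 1 / Real.sqrt N ≤ 1 := by
    rw [div_le_one hs0]; exact hs
  have key : Real.sqrt N * a ≤ π - a := by
    have h1 : Real.sqrt N * a ≤ 1 := by
      calc Real.sqrt N * a ≤ Real.sqrt N * (1 / Real.sqrt N) :=
            mul_le_mul_of_nonneg_left hale hs0.le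
        _ = 1 := by field_simp
    have := Real.pi_gt_three
    linarith [hale.trans hinv]
  have hdiv : Real.sqrt N ≤ (π - a) / a := (le_div_iff₀ hapos).mpr key
  have : (N : ℝ) = Real.sqrt N ^ 2 := by rw [Real.sq_sqrt (by positivity)]
  rw [fancyBalloonRatio, ← ha, this]
  exact pow_le_pow_left₀ hs0.le hdiv 2

lemma glim : Tendsto (fun N : ℕ => Real.sqrt N * Real.arctan (1 / Real.sqrt N))
    atTop (nhds 1) := by
  have hd : HasDerivAt Real.arctan 1 0 := by
    simpa using Real.hasDerivAt_arctan 0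
  have hslope := hasDerivAt_iff_tendsto_slope.mp hd
  have hx : Tendsto (fun N : ℕ => 1 / Real.sqrt N) atTop (nhdsWithin 0 {(0:ℝ)}ᶜ) := by
    rw [tendsto_nhdsWithin_iff]
    constructor
    · simpa [Pi.inv_def] using my_sqrt_tendsto.inv_tendsto_atTop
    · filter_upwards [eventually_ge_atTop 1] with N hN
      have : (0:ℝ) < Real.sqrt N := Real.sqrt_pos.mpr (by exact_mod_cast Nat.lt_of_lt_of_le Nat.zero_lt_one hN)
      simp only [Set.mem_compl_iff, Set.mem_singleton_iff]
      positivity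
  have := hslope.comp hx
  refine Tendsto.congr' ?_ this
  filter_upwards [eventually_ge_atTop 1] with N hN
  have hs0 : (0:ℝ) < Real.sqrt N := Real.sqrt_pos.mpr (by exact_mod_cast Nat.lt_of_lt_of_le Nat.zero_lt_one hN)
  simp only [Function.comp, slope_def_field, Real.arctan_zero, sub_zero]
  rw [one_div, div_eq_mul_inv, inv_inv, mul_comm]

theorem stmt_4 :
    (∀ N : ℕ, 1 ≤ N → (N : ℝ) ≤ fancyBalloonRatio N) ∧
      Tendsto fancyBalloonRatio atTop atTop ∧
      Tendsto (fun N : ℕ => fancyBalloonRatio N / (π ^ 2 * N)) atTop (nhds 1) := by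
  refine ⟨part1, ?_, ?_⟩
  · apply tendsto_atTop_mono' _ _ tendsto_natCast_atTop_atTop
    filter_upwards [eventually_ge_atTop 1] with N hN using part1 N hN
  · have ha0 : Tendsto (fun N : ℕ => Real.arctan (1 / Real.sqrt N)) atTop (nhds 0) := by
      have : Tendsto (fun N : ℕ => 1 / Real.sqrt N) atTop (nhds 0) := by
        simpa [Pi.inv_def] using my_sqrt_tendsto.inv_tendsto_atTop
      simpa [Function.comp_def] using (Real.continuous_arctan.tendsto 0).comp this
    have hnum : Tendsto (fun N : ℕ => (π - Real.arctan (1 / Real.sqrt N)) /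
        (Real.sqrt N * Real.arctan (1 / Real.sqrt N) * π)) atTop (nhds 1) := by
      have h1 : Tendsto (fun N : ℕ => π - Real.arctan (1 / Real.sqrt N)) atTop (nhds π) := by
        simpa using (tendsto_const_nhds (x := π)).sub ha0
      have h2 : Tendsto (fun N : ℕ => Real.sqrt N * Real.arctan (1 / Real.sqrt N) * π)
          atTop (nhds π) := by simpa using glim.mul (tendsto_const_nhds (x := π))
      have h3 := h1.div h2 Real.pi_ne_zero
      rwa [div_self Real.pi_ne_zero] at h3
    have := (hnum.mul hnum)
    rw [show (1:ℝ) = 1 * 1 by norm_num]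
    refine Tendsto.congr' ?_ this
    filter_upwards [eventually_ge_atTop 1] with N hN
    have hs0 : (0:ℝ) < Real.sqrt N := Real.sqrt_pos.mpr (by exact_mod_cast Nat.lt_of_lt_of_le Nat.zero_lt_one hN)
    have hapos : 0 < Real.arctan (1 / Real.sqrt N) := my_arctan_pos (by positivity)
    have hNpos : (0:ℝ) < (N:ℝ) := by exact_mod_cast Nat.lt_of_lt_of_le Nat.zero_lt_one hN
    have hNsq : Real.sqrt N * Real.sqrt N = (N:ℝ) := Real.mul_self_sqrt hNpos.le
    rw [fancyBalloonRatio]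
    field_simp
    ring_nf
    rw [Real.sq_sqrt hNpos.le]
    ring
end

section
/- Let E₁ ≤ E₂ ≤ … be positive reals satisfying, for each j and each z ∈ [E_j, E_{j+1}], the inequality Σ_{ℓ=1}^j (z - E_ℓ)(z - 5E_ℓ) ≤ 0. Then for all integers k ≥ j ≥ 1, the means satisfy Ē_k / Ē_j ≤ (5/3)(k/j)², where Ē_m = (1/m)Σ_{ℓ=1}^m E_ℓ. -/
open Finset

/-- derivative of the squared positive part -/
private lemma qder (x : ℝ) : HasDerivAt (fun y : ℝ => (max y 0)^2) (2 * max x 0) x := by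
  rcases lt_trichotomy x 0 with hx | hx | hx
  · have h : (fun y : ℝ => (max y 0)^2) =ᶠ[nhds x] (fun _ : ℝ => (0:ℝ)) := by
      filter_upwards [Iio_mem_nhds hx] with y hy
      simp [max_eq_right (le_of_lt (Set.mem_Iio.1 hy))]
    have h0 : HasDerivAt (fun _ : ℝ => (0:ℝ)) 0 x := hasDerivAt_const x 0
    have := h0.congr_of_eventuallyEq h
    simpa [max_eq_right hx.le] using this
  · subst hx
    rw [hasDerivAt_iff_tendsto_slope]
    have hb : ∀ y : ℝ, ‖slope (fun y : ℝ => (max y 0)^2) 0 y‖ ≤ |y| := by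
      intro y
      rw [slope_def_field]
      rcases le_or_gt y 0 with hy | hy
      · simp [max_eq_right hy]
      · have he : ((max y 0)^2 - (max (0:ℝ) 0)^2) / (y - 0) = y := by
          rw [max_eq_left hy.le, max_self, sub_zero,
            show (0:ℝ)^2 = 0 by norm_num, sub_zero, sq,
            mul_div_assoc, div_self hy.ne', mul_one]
        rw [he, Real.norm_eq_abs]
    have habs : Filter.Tendsto (fun y : ℝ => |y|) (nhdsWithin 0 {(0:ℝ)}ᶜ) (nhds 0) :=
      (continuous_abs.tendsto' 0 0 abs_zero).mono_left nhdsWithin_le_nhds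
    simpa using squeeze_zero_norm hb habs
  · have h : (fun y : ℝ => (max y 0)^2) =ᶠ[nhds x] (fun y : ℝ => y^2) := by
      filter_upwards [Ioi_mem_nhds hx] with y hy
      simp [max_eq_left (le_of_lt (Set.mem_Ioi.1 hy))]
    have h0 : HasDerivAt (fun y : ℝ => y^2) (2 * x) x := by
      simpa using hasDerivAt_pow 2 x
    have := h0.congr_of_eventuallyEq h
    simpa [max_eq_left hx.le] using this

private lemma exists_mid (E : ℕ → ℝ) (k : ℕ) (hk : 1 ≤ k) (z : ℝ)
    (h1 : E 1 ≤ z) (h2 : z ≤ E (k+1)) :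
    ∃ m, 1 ≤ m ∧ m ≤ k ∧ E m ≤ z ∧ z ≤ E (m+1) := by
  induction k with
  | zero => omega
  | succ n ih =>
    rcases Nat.eq_zero_or_pos n with hn | hn
    · subst hn
      exact ⟨1, le_refl _, le_refl _, h1, h2⟩
    · by_cases hz : z ≤ E (n+1)
      · obtain ⟨m, hm1, hmn, hml, hmr⟩ := ih hn hz
        exact ⟨m, hm1, hmn.trans (Nat.le_succ n), hml, hmr⟩
      · exact ⟨n+1, by omega, le_refl _, (not_le.1 hz).le, h2⟩

set_option maxHeartbeats 1000000 in
theorem stmt_15 (E : ℕ → ℝ) (hmono : Monotone E) (hpos : ∀ n, 0 < E n)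
    (hquad : ∀ j : ℕ, 1 ≤ j → ∀ z : ℝ, E j ≤ z → z ≤ E (j + 1) →
      ∑ ℓ ∈ Finset.Icc 1 j, (z - E ℓ) * (z - 5 * E ℓ) ≤ 0) :
    ∀ j k : ℕ, 1 ≤ j → j ≤ k →
      ((∑ ℓ ∈ Finset.Icc 1 k, E ℓ) / k) / ((∑ ℓ ∈ Finset.Icc 1 j, E ℓ) / j) ≤
        (5 / 3) * ((k : ℝ) / j) ^ 2 := by
  intro j k hj hjk
  have hk : 1 ≤ k := hj.trans hjk
  set Sj : ℝ := ∑ ℓ ∈ Finset.Icc 1 j, E ℓ with hSjdef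
  set Sk : ℝ := ∑ ℓ ∈ Finset.Icc 1 k, E ℓ with hSkdef
  have jR1 : (1:ℝ) ≤ (j:ℝ) := by exact_mod_cast hj
  have jpos : (0:ℝ) < (j:ℝ) := by linarith
  have hjkR : (j:ℝ) ≤ (k:ℝ) := by exact_mod_cast hjk
  have kpos : (0:ℝ) < (k:ℝ) := by linarith
  have hSjpos : 0 < Sj :=
    Finset.sum_pos (fun i _ => hpos i) ⟨1, by simp [hj]⟩
  have hSkpos : 0 < Sk :=
    Finset.sum_pos (fun i _ => hpos i) ⟨1, by simp [hk]⟩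
  -- The key polynomial inequality
  have key : Sk * (3 * (j:ℝ)^3) ≤ 5 * (k:ℝ)^3 * Sj := by
    by_cases hcase : E (k+1) < 5 * Sj / (j:ℝ)
    · -- small case : all eigenvalues up to k are below 5 * mean
      have hsplit : Sk = Sj + ∑ m ∈ Finset.Ioc j k, E m := by
        rw [hSkdef, hSjdef,
          show Finset.Icc 1 k = Finset.Ioc 0 k from Finset.Icc_add_one_left_eq_Ioc 0 k,
          show Finset.Icc 1 j = Finset.Ioc 0 j from Finset.Icc_add_one_left_eq_Ioc 0 j,
          ← Finset.sum_Ioc_consecutive _ (Nat.zero_le j) hjk]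
      have hsum : ∑ m ∈ Finset.Ioc j k, E m ≤ ((k:ℝ) - (j:ℝ)) * (5 * Sj / (j:ℝ)) := by
        have h1 : ∑ m ∈ Finset.Ioc j k, E m ≤ ∑ m ∈ Finset.Ioc j k, (5 * Sj / (j:ℝ)) := by
          apply Finset.sum_le_sum
          intro m hm
          have hm' := Finset.mem_Ioc.1 hm
          exact (hmono (by omega : m ≤ k + 1)).trans hcase.le
        have h2 : ∑ m ∈ Finset.Ioc j k, (5 * Sj / (j:ℝ)) = ((k - j : ℕ) : ℝ) * (5 * Sj / (j:ℝ)) := by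
          rw [Finset.sum_const, Nat.card_Ioc, nsmul_eq_mul]
        rw [h2, Nat.cast_sub hjk] at h1
        exact h1
      have hb : Sk * (j:ℝ) ≤ Sj * (j:ℝ) + 5 * ((k:ℝ) - (j:ℝ)) * Sj := by
        have h3 : Sk ≤ Sj + ((k:ℝ) - (j:ℝ)) * (5 * Sj / (j:ℝ)) := by
          rw [hsplit]; linarith
        have h4 := mul_le_mul_of_nonneg_right h3 jpos.le
        have h5 : (Sj + ((k:ℝ) - (j:ℝ)) * (5 * Sj / (j:ℝ))) * (j:ℝ)
            = Sj * (j:ℝ) + 5 * ((k:ℝ) - (j:ℝ)) * Sj := by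
          field_simp
        linarith [h5 ▸ h4]
      -- now conclude: (Sj j + 5 (k-j) Sj) * 3 j^2 ≤ 5 k^3 Sj
      have hb2 := mul_le_mul_of_nonneg_right hb (by positivity : (0:ℝ) ≤ 3 * (j:ℝ)^2)
      have hcube : 0 ≤ Sj * (((k:ℝ) - (j:ℝ))^2 * ((k:ℝ) + 2*(j:ℝ))) :=
        mul_nonneg hSjpos.le (mul_nonneg (sq_nonneg _) (by linarith))
      nlinarith [hb2, hcube, mul_pos hSjpos (pow_pos jpos 3)]
    · -- main case
      push_neg at hcase
      set B : ℝ := 5 * Sj / (j:ℝ) with hBdef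
      set w : ℝ := E (k+1) with hwdef
      have hw0 : 0 < w := hpos (k+1)
      have hB0 : 0 < B := by positivity
      set G : ℝ → ℝ := fun z => ∑ ℓ ∈ Finset.Icc 1 k, (max (z - E ℓ) 0)^2 with hGdef
      set Hp : ℝ → ℝ := fun z => ∑ ℓ ∈ Finset.Icc 1 k, max (z - E ℓ) 0 with hHdef
      have hGnonneg : ∀ z, 0 ≤ G z := fun z => Finset.sum_nonneg fun i _ => sq_nonneg _
      have hHnonneg : ∀ z, 0 ≤ Hp z := fun z => Finset.sum_nonneg fun i _ => le_max_right _ _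
      -- pointwise consequence of hquad
      have hPQ : ∀ z : ℝ, E 1 ≤ z → z ≤ E (k+1) → 5 * G z ≤ 4 * z * Hp z := by
        intro z h1 h2
        obtain ⟨m, hm1, hmk, hmz, hzm⟩ := exists_mid E k hk z h1 h2
        have hsub : Finset.Icc 1 m ⊆ Finset.Icc 1 k := Finset.Icc_subset_Icc_right hmk
        have hvan : ∀ x ∈ Finset.Icc 1 k, x ∉ Finset.Icc 1 m → max (z - E x) 0 = 0 := by
          intro x hx hxn
          have hx1 := Finset.mem_Icc.1 hx
          have hxm : m + 1 ≤ x := by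
            by_contra hcon
            exact hxn (Finset.mem_Icc.2 ⟨hx1.1, by omega⟩)
          have : z ≤ E x := hzm.trans (hmono hxm)
          exact max_eq_right (by linarith)
        have hGz : G z = ∑ ℓ ∈ Finset.Icc 1 m, (z - E ℓ)^2 := by
          simp only [hGdef]
          rw [← Finset.sum_subset hsub (fun x hx hxn => by rw [hvan x hx hxn]; norm_num)]
          apply Finset.sum_congr rfl
          intro ℓ hℓ
          have : E ℓ ≤ z := (hmono (Finset.mem_Icc.1 hℓ).2).trans hmz
          rw [max_eq_left (by linarith)]
        have hHz : Hp z = ∑ ℓ ∈ Finset.Icc 1 m, (z - E ℓ) := by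
          simp only [hHdef]
          rw [← Finset.sum_subset hsub (fun x hx hxn => hvan x hx hxn)]
          apply Finset.sum_congr rfl
          intro ℓ hℓ
          have : E ℓ ≤ z := (hmono (Finset.mem_Icc.1 hℓ).2).trans hmz
          rw [max_eq_left (by linarith)]
        have hs := hquad m hm1 z hmz hzm
        have hexp : ∑ ℓ ∈ Finset.Icc 1 m, (z - E ℓ) * (z - 5 * E ℓ)
            = 5 * (∑ ℓ ∈ Finset.Icc 1 m, (z - E ℓ)^2)
              - 4 * z * (∑ ℓ ∈ Finset.Icc 1 m, (z - E ℓ)) := by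
          rw [Finset.mul_sum, Finset.mul_sum, ← Finset.sum_sub_distrib]
          exact Finset.sum_congr rfl fun ℓ _ => by ring
        rw [hGz, hHz]
        linarith [hexp ▸ hs]
      -- derivative of G
      have hGder : ∀ z : ℝ, HasDerivAt G (2 * Hp z) z := by
        intro z
        have hsum : HasDerivAt (fun y => ∑ ℓ ∈ Finset.Icc 1 k, (max (y - E ℓ) 0)^2)
            (∑ ℓ ∈ Finset.Icc 1 k, 2 * max (z - E ℓ) 0) z := by
          apply HasDerivAt.fun_sum
          intro ℓ _
          have h1 : HasDerivAt (fun y : ℝ => y - E ℓ) 1 z := (hasDerivAt_id z).sub_const _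
          have := (qder (z - E ℓ)).comp z h1
          simpa [Function.comp_def] using this
        have : (∑ ℓ ∈ Finset.Icc 1 k, 2 * max (z - E ℓ) 0) = 2 * Hp z := by
          simp only [hHdef, Finset.mul_sum]
        rw [← this]
        exact hsum
      -- derivative of Phi = G^2 / z^5
      have hΦder : ∀ z : ℝ, 0 < z → HasDerivAt (fun y => (G y)^2 / y^5)
          ((2 * G z * (2 * Hp z) * z^5 - (G z)^2 * (5 * z^4)) / (z^5)^2) z := by
        intro z hz
        have h1 : HasDerivAt (fun y => (G y)^2) (2 * G z * (2 * Hp z)) z := by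
          exact ((hGder z).fun_pow 2).congr_deriv (by push_cast; ring)
        have h2 : HasDerivAt (fun y : ℝ => y^5) (5 * z^4) z := by
          simpa using hasDerivAt_pow 5 z
        exact h1.div h2 (by positivity)
      have hE1w : E 1 ≤ E (k+1) := hmono (by omega)
      -- monotonicity of Phi on [E 1, E (k+1)]
      have hmonoΦ : MonotoneOn (fun y => (G y)^2 / y^5) (Set.Icc (E 1) (E (k+1))) := by
        apply monotoneOn_of_deriv_nonneg (convex_Icc _ _)
        · intro z hz
          have hz0 : 0 < z := lt_of_lt_of_le (hpos 1) hz.1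
          exact ((hΦder z hz0).continuousAt).continuousWithinAt
        · intro z hz
          rw [interior_Icc] at hz
          have hz0 : 0 < z := lt_of_lt_of_le (hpos 1) hz.1.le
          exact ((hΦder z hz0).differentiableAt).differentiableWithinAt
        · intro z hz
          rw [interior_Icc] at hz
          have hz0 : 0 < z := lt_of_lt_of_le (hpos 1) hz.1.le
          rw [(hΦder z hz0).deriv]
          apply div_nonneg _ (by positivity)
          have h5 := hPQ z hz.1.le hz.2.le
          have heq : 2 * G z * (2 * Hp z) * z^5 - (G z)^2 * (5 * z^4)
              = z^4 * G z * (4 * z * Hp z - 5 * G z) := by ring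
          rw [heq]
          exact mul_nonneg (mul_nonneg (by positivity) (hGnonneg z)) (by linarith)
      -- E 1 ≤ B
      have hjE1 : (j:ℝ) * E 1 ≤ Sj := by
        have h1 : ∑ ℓ ∈ Finset.Icc 1 j, E 1 ≤ Sj := by
          apply Finset.sum_le_sum
          intro i hi
          exact hmono (Finset.mem_Icc.1 hi).1
        have h2 : ∑ ℓ ∈ Finset.Icc 1 j, E 1 = (j:ℝ) * E 1 := by
          rw [Finset.sum_const, Nat.card_Icc, nsmul_eq_mul]
          norm_num
        linarith [h2 ▸ h1]
      have hE1B : E 1 ≤ B := by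
        rw [hBdef, le_div_iff₀ jpos]
        nlinarith [hpos 1, hSjpos]
      -- apply monotonicity
      have hΦBw := hmonoΦ (Set.mem_Icc.2 ⟨hE1B, hcase⟩) (Set.mem_Icc.2 ⟨hE1w, le_refl _⟩) hcase
      have hcross : (G B)^2 * w^5 ≤ (G w)^2 * B^5 := by
        rw [div_le_div_iff₀ (by positivity) (by positivity)] at hΦBw
        exact hΦBw
      -- lower bound on G B
      have hGB : 16 * Sj^2 ≤ (j:ℝ) * G B := by
        have hsub : Finset.Icc 1 j ⊆ Finset.Icc 1 k := Finset.Icc_subset_Icc_right hjk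
        have h1 : ∑ ℓ ∈ Finset.Icc 1 j, (max (B - E ℓ) 0)^2 ≤ G B :=
          Finset.sum_le_sum_of_subset_of_nonneg hsub (fun i _ _ => sq_nonneg _)
        have h2 : (∑ ℓ ∈ Finset.Icc 1 j, max (B - E ℓ) 0)^2
            ≤ (j:ℝ) * ∑ ℓ ∈ Finset.Icc 1 j, (max (B - E ℓ) 0)^2 := by
          have := sq_sum_le_card_mul_sum_sq (s := Finset.Icc 1 j)
            (f := fun ℓ => max (B - E ℓ) 0)
          simpa [Nat.card_Icc] using this
        have h3 : 4 * Sj ≤ ∑ ℓ ∈ Finset.Icc 1 j, max (B - E ℓ) 0 := by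
          have ha : ∑ ℓ ∈ Finset.Icc 1 j, (B - E ℓ)
              ≤ ∑ ℓ ∈ Finset.Icc 1 j, max (B - E ℓ) 0 :=
            Finset.sum_le_sum fun i _ => le_max_left _ _
          have hb : ∑ ℓ ∈ Finset.Icc 1 j, (B - E ℓ) = (j:ℝ) * B - Sj := by
            rw [Finset.sum_sub_distrib, Finset.sum_const, Nat.card_Icc, nsmul_eq_mul]
            norm_num
            exact hSjdef.symm
          have hjB : (j:ℝ) * B = 5 * Sj := by
            rw [hBdef]
            field_simp
          linarith [hb ▸ ha]
        have h4 : (4 * Sj)^2 ≤ (∑ ℓ ∈ Finset.Icc 1 j, max (B - E ℓ) 0)^2 :=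
          pow_le_pow_left₀ (by positivity) h3 2
        have h5 := mul_le_mul_of_nonneg_left h1 jpos.le
        nlinarith [h4, h2, h5]
      -- quadratic at w
      have hq : 5 * G w ≤ 4 * w * Hp w := hPQ w hE1w (le_refl _)
      have hq2 : 25 * (G w)^2 ≤ 16 * w^2 * (Hp w)^2 := by
        nlinarith [mul_self_le_mul_self (by linarith [hGnonneg w] : (0:ℝ) ≤ 5 * G w) hq]
      -- main estimate : 16 j^3 w^3 ≤ 125 Sj (Hp w)^2
      have hmain : 16 * (j:ℝ)^3 * w^3 ≤ 125 * Sj * (Hp w)^2 := by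
        have d1 : 256 * Sj^4 ≤ (j:ℝ)^2 * (G B)^2 := by
          nlinarith [pow_le_pow_left₀ (by positivity : (0:ℝ) ≤ 16 * Sj^2) hGB 2]
        have d3' : (j:ℝ)^3 * ((j:ℝ)^2 * B^5) = 3125 * Sj^5 := by
          rw [hBdef]
          field_simp
          ring
        have d4 : 256 * Sj^4 * w^5 * (j:ℝ)^3 ≤ 3125 * Sj^5 * (G w)^2 := by
          have s1 : 256 * Sj^4 * w^5 ≤ (j:ℝ)^2 * (G B)^2 * w^5 :=
            mul_le_mul_of_nonneg_right d1 (by positivity)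
          have s2 : (j:ℝ)^2 * ((G B)^2 * w^5) ≤ (j:ℝ)^2 * ((G w)^2 * B^5) :=
            mul_le_mul_of_nonneg_left hcross (by positivity)
          have s12 : 256 * Sj^4 * w^5 ≤ (j:ℝ)^2 * ((G w)^2 * B^5) := by linarith
          have s3 := mul_le_mul_of_nonneg_left s12 (by positivity : (0:ℝ) ≤ (j:ℝ)^3)
          calc 256 * Sj^4 * w^5 * (j:ℝ)^3 = (j:ℝ)^3 * (256 * Sj^4 * w^5) := by ring
            _ ≤ (j:ℝ)^3 * ((j:ℝ)^2 * ((G w)^2 * B^5)) := s3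
            _ = (G w)^2 * ((j:ℝ)^3 * ((j:ℝ)^2 * B^5)) := by ring
            _ = 3125 * Sj^5 * (G w)^2 := by rw [d3']; ring
        have t1 : 3125 * Sj^5 * (G w)^2 ≤ 2000 * Sj^5 * w^2 * (Hp w)^2 := by
          have := mul_le_mul_of_nonneg_left hq2 (show (0:ℝ) ≤ 125 * Sj^5 by positivity)
          linarith
        have hfin : (16 * (j:ℝ)^3 * w^3) * (16 * Sj^4 * w^2)
            ≤ (125 * Sj * (Hp w)^2) * (16 * Sj^4 * w^2) := by
          have := d4.trans t1
          linarith
        exact le_of_mul_le_mul_right hfin (by positivity)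
      -- introduce square roots
      set u : ℝ := Real.sqrt w with hudef
      have hu2 : u^2 = w := Real.sq_sqrt hw0.le
      have hu0 : 0 ≤ u := Real.sqrt_nonneg w
      set a : ℝ := Real.sqrt (16 * (j:ℝ)^3 / (125 * Sj)) with hadef
      have ha0 : 0 ≤ a := Real.sqrt_nonneg _
      have ha2 : a^2 = 16 * (j:ℝ)^3 / (125 * Sj) := Real.sq_sqrt (by positivity)
      have ha2' : 125 * Sj * a^2 = 16 * (j:ℝ)^3 := by
        rw [ha2]
        field_simp
      have hau : a * u^3 ≤ Hp w := by
        have h1 : (a * u^3)^2 ≤ (Hp w)^2 := by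
          have he : (a * u^3)^2 = a^2 * (u^2)^3 := by ring
          rw [he, hu2, ha2, div_mul_eq_mul_div, div_le_iff₀ (by positivity)]
          nlinarith [hmain]
        calc a * u^3 = Real.sqrt ((a * u^3)^2) := (Real.sqrt_sq (by positivity)).symm
          _ ≤ Real.sqrt ((Hp w)^2) := Real.sqrt_le_sqrt h1
          _ = Hp w := Real.sqrt_sq (hHnonneg w)
      -- Hp w = k w - Sk
      have hHw : Hp w = (k:ℝ) * w - Sk := by
        simp only [hHdef]
        have hcongr : ∀ ℓ ∈ Finset.Icc 1 k, max (w - E ℓ) 0 = w - E ℓ := by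
          intro ℓ hℓ
          have : E ℓ ≤ w := hmono (by have := (Finset.mem_Icc.1 hℓ).2; omega)
          exact max_eq_left (by linarith)
        rw [Finset.sum_congr rfl hcongr, Finset.sum_sub_distrib, Finset.sum_const,
          Nat.card_Icc, nsmul_eq_mul, hSkdef]
        norm_num
      -- finish
      have hSk_le : Sk ≤ (k:ℝ) * u^2 - a * u^3 := by
        have : (k:ℝ) * u^2 = (k:ℝ) * w := by rw [hu2]
        linarith [hau, hHw]
      have hcube : 27 * a^2 * ((k:ℝ) * u^2 - a * u^3) ≤ 4 * (k:ℝ)^3 := by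
        nlinarith [mul_nonneg (sq_nonneg (3*a*u - 2*(k:ℝ)))
          (by positivity : (0:ℝ) ≤ 3*a*u + (k:ℝ))]
      have h27 : 27 * a^2 * Sk ≤ 4 * (k:ℝ)^3 :=
        le_trans (mul_le_mul_of_nonneg_left hSk_le (by positivity : (0:ℝ) ≤ 27 * a^2)) hcube
      have e1 : 125 * Sj * a^2 * Sk = 16 * (j:ℝ)^3 * Sk := by
        linear_combination Sk * ha2'
      have h2 := mul_le_mul_of_nonneg_left h27 (by positivity : (0:ℝ) ≤ 125 * Sj)
      have hSjk : 0 ≤ Sj * (k:ℝ)^3 := mul_nonneg hSjpos.le (by positivity)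
      nlinarith [h2, e1, hSjk]
  -- conclude from `key`
  have hsjj : (0:ℝ) < Sj / (j:ℝ) := by positivity
  rw [div_le_iff₀ hsjj, div_le_iff₀ kpos]
  have heq : 5 / 3 * ((k:ℝ) / (j:ℝ)) ^ 2 * (Sj / (j:ℝ)) * (k:ℝ)
      = 5 * (k:ℝ)^3 * Sj / (3 * (j:ℝ)^3) := by
    field_simp
  rw [heq, le_div_iff₀ (by positivity)]
  linarith [key]
end

section
/- Let Γ_n be a finite tree (graph-theoretic, with n vertices plus leaf edges). Call a map C from the edge set to {0,1} admissible if at every internal vertex the number of incident edges e with C(e) = 1 is even. Then the number a(e) of admissible colorings with C(e) = 1 is the same for every edge e. -/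
/-- A coloring of the edges of `G` by `{0,1}` (here `Bool`) is admissible if at every
internal vertex (degree at least 2) the number of incident edges colored `1` is even. -/
def AdmissibleColoring {V : Type*} [Fintype V] [DecidableEq V] (G : SimpleGraph V)
    [DecidableRel G.Adj] (C : G.edgeSet → Bool) : Prop :=
  ∀ v : V, 2 ≤ G.degree v →
    Even (Nat.card {e : G.edgeSet // C e = true ∧ v ∈ (e : Sym2 V)})

namespace Stmt16Aux

open SimpleGraph

variable {V : Type*} [Fintype V] [DecidableEq V] {G : SimpleGraph V} [DecidableRel G.Adj]

/-- Parity of the cardinal of a subtype as a sum in `ZMod 2`. -/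
lemma even_card_iff_sum (p : G.edgeSet → Prop) [DecidablePred p] :
    Even (Nat.card {f : G.edgeSet // p f}) ↔
      (∑ f : G.edgeSet, if p f then (1 : ZMod 2) else 0) = 0 := by
  rw [Nat.card_eq_fintype_card, Fintype.card_subtype, Finset.card_filter,
    ← ZMod.natCast_eq_zero_iff_even]
  push_cast
  rfl

/-- The pointwise xor of two admissible colorings is admissible. -/
lemma admissible_xor {C D : G.edgeSet → Bool} (hC : AdmissibleColoring G C)
    (hD : AdmissibleColoring G D) :
    AdmissibleColoring G (fun f => xor (C f) (D f)) := by
  intro v hv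
  have hC' := hC v hv
  have hD' := hD v hv
  rw [even_card_iff_sum] at hC' hD' ⊢
  have : ∀ f : G.edgeSet,
      (if (xor (C f) (D f)) = true ∧ v ∈ (f : Sym2 V) then (1 : ZMod 2) else 0) =
        (if C f = true ∧ v ∈ (f : Sym2 V) then (1 : ZMod 2) else 0) +
          (if D f = true ∧ v ∈ (f : Sym2 V) then (1 : ZMod 2) else 0) := by
    intro f
    by_cases hvf : v ∈ (f : Sym2 V) <;> cases hCf : C f <;> cases hDf : D f <;>
      simp [hvf, hCf, hDf] <;> decide
  rw [Finset.sum_congr rfl (fun f _ => this f), Finset.sum_add_distrib, hC', hD', add_zero]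

/-- Any path containing at least one edge can be extended (at its start) to a path whose
starting vertex has degree at most 1, in an acyclic graph. -/
lemma extend_path (hA : G.IsAcyclic) :
    ∀ (n : ℕ) (y x : V) (p : G.Walk y x), p.IsPath → 1 ≤ p.length →
      Fintype.card V - p.length ≤ n →
      ∃ (z : V) (q : G.Walk z x), q.IsPath ∧ 1 ≤ q.length ∧
        (∀ s, s ∈ p.edges → s ∈ q.edges) ∧ G.degree z ≤ 1 := by
  intro n
  induction n with
  | zero =>
    intro y x p hp hl hn
    have := hp.length_lt
    omega
  | succ n ih =>
    intro y x p hp hl hn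
    by_cases hd : G.degree y ≤ 1
    · exact ⟨y, p, hp, hl, fun s hs => hs, hd⟩
    · push_neg at hd
      cases p with
      | nil => simp at hl
      | cons h' p' =>
        rename_i s
        have hdeg : 1 < (G.neighborFinset y).card := by
          rwa [G.card_neighborFinset_eq_degree]
        obtain ⟨z, hz_mem, hz_ne⟩ := Finset.exists_mem_ne hdeg s
        have hadj : G.Adj y z := by rwa [SimpleGraph.mem_neighborFinset] at hz_mem
        have hyp' : y ∉ p'.support := ((SimpleGraph.Walk.cons_isPath_iff _ _).mp hp).2
        have hz_not : z ∉ (SimpleGraph.Walk.cons h' p').support := by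
          intro hzs
          have hzy : z ≠ y := fun h => G.loopless.irrefl y (h ▸ hadj)
          have hz2 : z ∈ p'.support := by
            have hmem : z ∈ y :: p'.support := by
              rwa [SimpleGraph.Walk.support_cons] at hzs
            rcases List.mem_cons.mp hmem with h | h
            · exact absurd h hzy
            · exact h
          have hp' : p'.IsPath := ((SimpleGraph.Walk.cons_isPath_iff _ _).mp hp).1
          have hd' : (p'.takeUntil z hz2).IsPath := hp'.takeUntil hz2
          have hynd : y ∉ (p'.takeUntil z hz2).support :=
            fun h => hyp' (SimpleGraph.Walk.support_takeUntil_subset _ hz2 h)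
          have hwpath : ((p'.takeUntil z hz2).concat hadj.symm).IsPath := by
            rw [SimpleGraph.Walk.isPath_def, SimpleGraph.Walk.support_concat]
            simp [List.nodup_append, hd'.support_nodup, hynd, List.disjoint_left]
            exact fun a ha h => hynd (h ▸ ha)
          have hne : ¬ s(y, s) ∈ ((p'.takeUntil z hz2).concat hadj.symm).edges := by
            rw [SimpleGraph.Walk.edges_concat, List.concat_eq_append]
            intro hmem
            rcases List.mem_append.mp hmem with hm | hm
            · exact hynd (SimpleGraph.Walk.fst_mem_support_of_mem_edges _ hm)
            · rw [List.mem_singleton, Sym2.eq_iff] at hm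
              rcases hm with ⟨h1, h2⟩ | ⟨h1, h2⟩
              · exact hzy h1.symm
              · exact hz_ne h2.symm
          exact hA _ ((SimpleGraph.Walk.cons_isCycle_iff _ h').mpr ⟨hwpath, hne⟩)
        refine ih z x (SimpleGraph.Walk.cons hadj.symm (SimpleGraph.Walk.cons h' p')) ?_ ?_ ?_ |>.imp ?_
        · rw [SimpleGraph.Walk.cons_isPath_iff]; exact ⟨hp, hz_not⟩
        · simp [SimpleGraph.Walk.length_cons]
        · rw [SimpleGraph.Walk.length_cons]; omega
        · rintro z' ⟨q, hq, hql, hqe, hqd⟩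
          exact ⟨q, hq, hql, fun t ht => hqe t (by rw [SimpleGraph.Walk.edges_cons]; exact List.mem_cons_of_mem _ ht), hqd⟩

/-- For every edge of a tree there is an admissible coloring taking value `true` there. -/
lemma exists_admissible (hG : G.IsTree) (e : G.edgeSet) :
    ∃ D : G.edgeSet → Bool, AdmissibleColoring G D ∧ D e = true := by
  obtain ⟨s0, hs0⟩ := e
  revert hs0
  refine Sym2.ind (fun u w => ?_) s0
  intro hs0
  have hadj : G.Adj u w := (SimpleGraph.mem_edgeSet G).mp hs0
  have hp0 : (SimpleGraph.Walk.cons hadj SimpleGraph.Walk.nil).IsPath := by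
    simp [SimpleGraph.Walk.cons_isPath_iff, hadj.ne]
  obtain ⟨z, q, hq, hql, hqe, hzd⟩ :=
    extend_path hG.2 (Fintype.card V) u w _ hp0 (by simp) (Nat.sub_le _ _)
  obtain ⟨z', r, hr, hrl, hre, hzd'⟩ :=
    extend_path hG.2 (Fintype.card V) w z q.reverse hq.reverse
      (by rwa [SimpleGraph.Walk.length_reverse]) (Nat.sub_le _ _)
  have he_r : s(u, w) ∈ r.edges := by
    refine hre _ ?_
    rw [SimpleGraph.Walk.edges_reverse, List.mem_reverse]
    exact hqe _ (by simp)
  refine ⟨fun f => decide ((f : Sym2 V) ∈ r.edges), ?_, by simpa using he_r⟩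
  intro v hv
  have hzne : v ≠ z' ∧ v ≠ z := by
    constructor <;> rintro rfl <;> omega
  have heven : Even (r.edges.countP (fun s => decide (v ∈ s))) :=
    (hr.isTrail.even_countP_edges_iff v).mpr (fun _ => hzne)
  have hLnd : (r.edges.filter (fun s => decide (v ∈ s))).Nodup :=
    hr.isTrail.edges_nodup.filter _
  have hcard : Nat.card {f : G.edgeSet //
      (fun f : G.edgeSet => decide ((f : Sym2 V) ∈ r.edges)) f = true ∧ v ∈ (f : Sym2 V)} =
      (r.edges.filter (fun s => decide (v ∈ s))).length := by
    rw [Nat.card_eq_fintype_card, Fintype.card_subtype, ← List.toFinset_card_of_nodup hLnd]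
    refine Finset.card_bij (fun f _ => (f : Sym2 V)) ?_ ?_ ?_
    · intro f hf
      simp only [Finset.mem_filter, Finset.mem_univ, true_and, decide_eq_true_eq] at hf
      simp only [List.mem_toFinset, List.mem_filter, decide_eq_true_eq]
      exact ⟨hf.1, hf.2⟩
    · intro a _ b _ hab
      exact Subtype.ext hab
    · intro t ht
      simp only [List.mem_toFinset, List.mem_filter, decide_eq_true_eq] at ht
      exact ⟨⟨t, r.edges_subset_edgeSet ht.1⟩,
        by simp only [Finset.mem_filter, Finset.mem_univ, true_and, decide_eq_true_eq];
           exact ⟨ht.1, ht.2⟩, rfl⟩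
  rw [hcard, ← List.countP_eq_length_filter]
  exact heven

end Stmt16Aux

theorem stmt_16 {V : Type*} [Fintype V] [DecidableEq V] (G : SimpleGraph V)
    [DecidableRel G.Adj] (hG : G.IsTree) (e e' : G.edgeSet) :
    Nat.card {C : G.edgeSet → Bool // AdmissibleColoring G C ∧ C e = true} =
      Nat.card {C : G.edgeSet → Bool // AdmissibleColoring G C ∧ C e' = true} := by
  classical
  have key : ∀ f : G.edgeSet,
      Nat.card {C : G.edgeSet → Bool // AdmissibleColoring G C ∧ C f = true} * 2 =
        Nat.card {C : G.edgeSet → Bool // AdmissibleColoring G C} := by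
    intro f
    obtain ⟨D, hD, hDf⟩ := Stmt16Aux.exists_admissible hG f
    have flip : {C : G.edgeSet → Bool // AdmissibleColoring G C ∧ C f = true} ≃
        {C : G.edgeSet → Bool // AdmissibleColoring G C ∧ C f = false} :=
      { toFun := fun C => ⟨fun g => xor (C.1 g) (D g),
          Stmt16Aux.admissible_xor C.2.1 hD, by simp [C.2.2, hDf]⟩
        invFun := fun C => ⟨fun g => xor (C.1 g) (D g),
          Stmt16Aux.admissible_xor C.2.1 hD, by simp [C.2.2, hDf]⟩
        left_inv := fun C => Subtype.ext (funext fun g => by simp [Bool.xor_assoc])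
        right_inv := fun C => Subtype.ext (funext fun g => by simp [Bool.xor_assoc]) }
    have E2 : {x : {C : G.edgeSet → Bool // AdmissibleColoring G C} // ¬(x.1 f = true)} ≃
        {x : {C : G.edgeSet → Bool // AdmissibleColoring G C} // x.1 f = false} :=
      Equiv.subtypeEquivRight (fun x => by simp)
    have split : {C : G.edgeSet → Bool // AdmissibleColoring G C} ≃
        {C : G.edgeSet → Bool // AdmissibleColoring G C ∧ C f = true} ⊕
        {C : G.edgeSet → Bool // AdmissibleColoring G C ∧ C f = false} :=
      (Equiv.sumCompl (fun x : {C : G.edgeSet → Bool // AdmissibleColoring G C} =>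
        x.1 f = true)).symm.trans
        (Equiv.sumCongr
          (Equiv.subtypeSubtypeEquivSubtypeInter (AdmissibleColoring G)
            (fun C => C f = true))
          (E2.trans (Equiv.subtypeSubtypeEquivSubtypeInter (AdmissibleColoring G)
            (fun C => C f = false))))
    rw [Nat.card_congr split, Nat.card_sum, ← Nat.card_congr flip, mul_two]
  exact Nat.eq_of_mul_eq_mul_right (by norm_num) ((key e).trans (key e').symm)
end
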